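/- Let D be a complete, cocomplete, extremally co-well-powered, (extremal epi, mono) category. Then QD is complete and cocomplete; limits in QD are formed by taking the limit of the underlying diagram in D and endowing it with the reduced pull back filtration determined by the limit cone, and colimits are formed by taking the colimit of the underlying diagram in D and endowing it with the push forward filtration determined by the colimit cocone. -/

import Mathlib

/-!
Limits and colimits in `QD` are computed in `D`. In an (extremal epi, mono) category a
projective filtration is reduced exactly when it is closed under cancelling monomorphisms on
the right (diagonal fill-in gives one direction, factorisation the other). This closure is
preserved by push forwards and intersections, so the push forward filtration on a colimit is
reduced. On a limit, the extremal epi parts of the filtration generated by the pulled back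
filtrations form a reduced filtration. A cone from a reduced object pulls the generators into
its filtration, hence also the generated filtration (by minimality) and its reduction (by
mono-cancellation). Finite limits in `D` make all these classes directed, since they contain
the terminal map and are closed under pairing.
-/

open CategoryTheory CategoryTheory.Limits

universe w v u v₂ u₂

namespace FilteredCats

variable {D : Type u} [Category.{v} D]

/-- The class of morphisms of `D` with source `X`. -/
def MorFrom (X : D) : Type (max u v) := Σ Y : D, X ⟶ Y

/-- `Dom δ₁ δ₂` means `δ₁ ≥ δ₂`: there is `h` with `h ∘ δ₁ = δ₂`. -/
def Dom {X : D} (δ₁ δ₂ : MorFrom X) : Prop :=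
  ∃ h : δ₁.1 ⟶ δ₂.1, δ₁.2 ≫ h = δ₂.2

/-- A projective filtration on `X`: a nonempty, directed, saturated class of
morphisms with source `X`. -/
structure ProjFilt (X : D) where
  carrier : Set (MorFrom X)
  nonempty' : carrier.Nonempty
  directed' : ∀ δ₁ ∈ carrier, ∀ δ₂ ∈ carrier, ∃ δ ∈ carrier, Dom δ δ₁ ∧ Dom δ δ₂
  saturated' : ∀ δ₁ ∈ carrier, ∀ δ₂, Dom δ₁ δ₂ → δ₂ ∈ carrier

/-- The pull back of a set of morphisms with source `X` along `f : X' ⟶ X`. -/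
def pullSet {X' X : D} (f : X' ⟶ X) (S : Set (MorFrom X)) : Set (MorFrom X') :=
  {δ' | ∃ δ ∈ S, δ' = ⟨δ.1, f ≫ δ.2⟩}

/-- The pull back of a projective filtration along `f : X' ⟶ X`. -/
def ProjFilt.pull {X' X : D} (f : X' ⟶ X) (P : ProjFilt X) : ProjFilt X' where
  carrier := pullSet f P.carrier
  nonempty' := by
    obtain ⟨δ, hδ⟩ := P.nonempty'
    exact ⟨⟨δ.1, f ≫ δ.2⟩, δ, hδ, rfl⟩
  directed' := by
    rintro _ ⟨δ₁, h₁, rfl⟩ _ ⟨δ₂, h₂, rfl⟩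
    obtain ⟨δ, hδ, ⟨g₁, hg₁⟩, ⟨g₂, hg₂⟩⟩ := P.directed' δ₁ h₁ δ₂ h₂
    exact ⟨⟨δ.1, f ≫ δ.2⟩, ⟨δ, hδ, rfl⟩,
      ⟨g₁, by simp [hg₁]⟩, ⟨g₂, by simp [hg₂]⟩⟩
  saturated' := by
    rintro _ ⟨δ, hδ, rfl⟩ δ₂ ⟨h, hh⟩
    refine ⟨⟨δ₂.1, δ.2 ≫ h⟩, P.saturated' δ hδ _ ⟨h, rfl⟩, ?_⟩
    obtain ⟨Y₂, g₂⟩ := δ₂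
    have hg : g₂ = f ≫ (δ.2 ≫ h) := by simpa using hh.symm
    exact Sigma.ext rfl (heq_of_eq hg)

/-- A projectively filtered object of `D`. -/
structure PObj (D : Type u) [Category.{v} D] where
  base : D
  filt : ProjFilt base

/-- A morphism of projectively filtered objects: a morphism of the underlying
objects such that the pull back of the target filtration is contained in the
source filtration. -/
structure PHom (A B : PObj D) : Type v where
  toHom : A.base ⟶ B.base
  mem : ∀ δ ∈ B.filt.carrier, (⟨δ.1, toHom ≫ δ.2⟩ : MorFrom A.base) ∈ A.filt.carrier

theorem PHom.ext' {A B : PObj D} {f g : PHom A B} (h : f.toHom = g.toHom) : f = g := by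
  cases f; cases g; cases h; rfl

instance : Category.{v} (PObj D) where
  Hom := PHom
  id A := ⟨𝟙 A.base, fun δ hδ => by simp only [Category.id_comp]; exact hδ⟩
  comp {A B C} f g := ⟨f.toHom ≫ g.toHom, fun δ hδ => by
    have h1 := g.mem δ hδ
    have h2 := f.mem _ h1
    simpa using h2⟩
  id_comp f := PHom.ext' (Category.id_comp _)
  comp_id f := PHom.ext' (Category.comp_id _)
  assoc f g h := PHom.ext' (Category.assoc _ _ _)

@[simp] theorem PObj.id_toHom (A : PObj D) : PHom.toHom (𝟙 A) = 𝟙 A.base := rfl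
@[simp] theorem PObj.comp_toHom {A B C : PObj D} (f : A ⟶ B) (g : B ⟶ C) :
    PHom.toHom (f ≫ g) = PHom.toHom f ≫ PHom.toHom g := rfl

/-- The forgetful functor `PD → D`. -/
def Pforget (D : Type u) [Category.{v} D] : PObj D ⥤ D where
  obj A := A.base
  map f := PHom.toHom f

/-- The discrete filtration functor `D → PD`, `X ↦ (X, M(X))`. -/
def Pdiscrete (D : Type u) [Category.{v} D] : D ⥤ PObj D where
  obj X :=
    { base := X
      filt :=
        { carrier := Set.univ
          nonempty' := ⟨⟨X, 𝟙 X⟩, trivial⟩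
          directed' := fun δ₁ _ δ₂ _ =>
            ⟨⟨X, 𝟙 X⟩, trivial, ⟨δ₁.2, Category.id_comp _⟩, ⟨δ₂.2, Category.id_comp _⟩⟩
          saturated' := fun _ _ _ _ => trivial } }
  map f := ⟨f, fun _ _ => trivial⟩

/-- The functor `PD → PE` induced by a functor `G : D → E`. -/
def Pfunctor {E : Type u₂} [Category.{v₂} E] (G : D ⥤ E) : PObj D ⥤ PObj E where
  obj A :=
    { base := G.obj A.base
      filt :=
        { carrier := {δ' | ∃ δ ∈ A.filt.carrier,
            Dom (⟨G.obj δ.1, G.map δ.2⟩ : MorFrom (G.obj A.base)) δ'}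
          nonempty' := by
            obtain ⟨δ, hδ⟩ := A.filt.nonempty'
            exact ⟨⟨G.obj δ.1, G.map δ.2⟩, δ, hδ, ⟨𝟙 _, Category.comp_id _⟩⟩
          directed' := by
            rintro δ'₁ ⟨δ₁, h₁, g₁, hg₁⟩ δ'₂ ⟨δ₂, h₂, g₂, hg₂⟩
            obtain ⟨δ, hδ, ⟨k₁, hk₁⟩, ⟨k₂, hk₂⟩⟩ := A.filt.directed' δ₁ h₁ δ₂ h₂
            refine ⟨⟨G.obj δ.1, G.map δ.2⟩, ⟨δ, hδ, ⟨𝟙 _, Category.comp_id _⟩⟩,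
              ⟨G.map k₁ ≫ g₁, ?_⟩, ⟨G.map k₂ ≫ g₂, ?_⟩⟩
            · rw [← Category.assoc, ← G.map_comp, hk₁, hg₁]
            · rw [← Category.assoc, ← G.map_comp, hk₂, hg₂]
          saturated' := by
            rintro δ'₁ ⟨δ, hδ, g, hg⟩ δ'₂ ⟨h, hh⟩
            exact ⟨δ, hδ, ⟨g ≫ h, by rw [← Category.assoc, hg, hh]⟩⟩ } }
  map {A B} f :=
    ⟨G.map (PHom.toHom f), by
      rintro δ' ⟨δ, hδ, g, hg⟩
      exact ⟨⟨δ.1, PHom.toHom f ≫ δ.2⟩, f.mem δ hδ,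
        ⟨g, by rw [← hg, ← Category.assoc, ← G.map_comp]⟩⟩⟩
  map_id A := PHom.ext' (G.map_id _)
  map_comp f g := PHom.ext' (G.map_comp _ _)

/-- An extremal epimorphism: an epimorphism such that in any factorisation
through a monomorphism, the monomorphism is an isomorphism. -/
def ExtremalEpi {C : Type u₂} [Category.{v₂} C] {X Y : C} (e : X ⟶ Y) : Prop :=
  Epi e ∧ ∀ ⦃Z : C⦄ (g : X ⟶ Z) (m : Z ⟶ Y), Mono m → g ≫ m = e → IsIso m

/-- An (extremal epi, mono) category: every morphism factors as an extremal
epimorphism followed by a monomorphism and such factorisations have the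
diagonal fill-in property. -/
structure EMCat (C : Type u₂) [Category.{v₂} C] : Prop where
  fact : ∀ {X Y : C} (f : X ⟶ Y), ∃ (Z : C) (e : X ⟶ Z) (m : Z ⟶ Y),
    ExtremalEpi e ∧ Mono m ∧ e ≫ m = f
  diag : ∀ {A B Z X : C} (e : A ⟶ B) (m : Z ⟶ X) (g : A ⟶ Z) (h : B ⟶ X),
    ExtremalEpi e → Mono m → g ≫ m = e ≫ h → ∃ d : B ⟶ Z, e ≫ d = g ∧ d ≫ m = h

/-- A projective filtration is reduced if it has an initial subclass of
extremal epimorphisms. -/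
def ProjFilt.Reduced {X : D} (P : ProjFilt X) : Prop :=
  ∀ δ ∈ P.carrier, ∃ ε ∈ P.carrier, ExtremalEpi ε.2 ∧ Dom ε δ

/-- The category of reduced projectively filtered objects of `D`. -/
def QObj (D : Type u) [Category.{v} D] := ObjectProperty.FullSubcategory (fun A : PObj D => A.filt.Reduced)

instance : Category.{v} (QObj D) := ObjectProperty.FullSubcategory.category _

/-- The inclusion functor `QD → PD`. -/
def qpInclusion (D : Type u) [Category.{v} D] : QObj D ⥤ PObj D :=
  ObjectProperty.ι _

/-- A category is extremally co-well-powered if every object has, up to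
isomorphism, only a (small) set of extremal epimorphisms out of it. -/
def ECWP (C : Type u₂) [Category.{v₂} C] : Prop :=
  ∀ X : C, ∃ (ι : Type v₂) (Y : ι → C) (e : ∀ i, X ⟶ Y i),
    (∀ i, ExtremalEpi (e i)) ∧
    ∀ ⦃Z : C⦄ (f : X ⟶ Z), ExtremalEpi f → ∃ (i : ι) (φ : Y i ≅ Z), e i ≫ φ.hom = f

/-- The category `(P, D)` associated to a projective filtration: objects are the
elements of `P`, morphisms `δ₁ → δ₂` are morphisms `g` of `D` with `g ∘ δ₁ = δ₂`. -/
def FiltCat {X : D} (P : ProjFilt X) : Type (max u v) := {δ : MorFrom X // δ ∈ P.carrier}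

instance {X : D} (P : ProjFilt X) : Category.{v} (FiltCat P) where
  Hom δ₁ δ₂ := {g : δ₁.1.1 ⟶ δ₂.1.1 // δ₁.1.2 ≫ g = δ₂.1.2}
  id δ := ⟨𝟙 _, Category.comp_id _⟩
  comp f g := ⟨f.1 ≫ g.1, by rw [← Category.assoc, f.2, g.2]⟩
  id_comp f := Subtype.ext (Category.id_comp _)
  comp_id f := Subtype.ext (Category.comp_id _)
  assoc f g h := Subtype.ext (Category.assoc _ _ _)

/-- The functor `(P, D) → D` sending an element of the filtration to its target. -/
def FiltDiagram {X : D} (P : ProjFilt X) : FiltCat P ⥤ D where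
  obj δ := δ.1.1
  map g := g.1

/-- The canonical cone on the diagram of a projective filtration, with apex the
underlying object. -/
def filtCone {X : D} (P : ProjFilt X) : Limits.Cone (FiltDiagram P) where
  pt := X
  π :=
    { app := fun δ => δ.1.2
      naturality := fun δ₁ δ₂ g => by
        have := g.2
        dsimp [FiltDiagram] at *
        simp [this] }

/-- A reduced projective filtration is an iso-filtration if the canonical cone
on its diagram is a limit cone, i.e. the limit exists and the canonical morphism
from the underlying object to it is an isomorphism. -/
def IsoFilt {X : D} (P : ProjFilt X) : Prop :=
  Nonempty (Limits.IsLimit (filtCone P))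

/-- The category of iso-filtered objects of `D`. -/
def KObj (D : Type u) [Category.{v} D] :=
  ObjectProperty.FullSubcategory (fun A : QObj D => IsoFilt A.obj.filt)

instance : Category.{v} (KObj D) := ObjectProperty.FullSubcategory.category _

/-- The inclusion functor `KD → QD`. -/
def kqInclusion (D : Type u) [Category.{v} D] : KObj D ⥤ QObj D :=
  ObjectProperty.ι _

/-- The forgetful functor `KD → D`. -/
def Kforget (D : Type u) [Category.{v} D] : KObj D ⥤ D :=
  kqInclusion D ⋙ qpInclusion D ⋙ Pforget D

/-- The smallest projective filtration containing a class of morphisms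
(as a class). -/
def genSet {X : D} (S : Set (MorFrom X)) : Set (MorFrom X) :=
  {δ | ∀ P : ProjFilt X, S ⊆ P.carrier → δ ∈ P.carrier}

/-- The reduction of a class of morphisms: the saturation of the class of
extremal epimorphism parts of (extremal epi, mono)-factorisations of its
elements. -/
def redSet {X : D} (S : Set (MorFrom X)) : Set (MorFrom X) :=
  {δ | ∃ ε : MorFrom X, ExtremalEpi ε.2 ∧
    (∃ δ' ∈ S, ∃ m : ε.1 ⟶ δ'.1, Mono m ∧ ε.2 ≫ m = δ'.2) ∧ Dom ε δ}

/-- The push forward of a filtration class along `f` (single morphism case). -/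
def pushSet {X Y : D} (f : X ⟶ Y) (S : Set (MorFrom X)) : Set (MorFrom Y) :=
  {g | (⟨g.1, f ≫ g.2⟩ : MorFrom X) ∈ S}

/-- The discrete filtration on an object, as an iso-filtered object. -/
def kDiscreteObj (X : D) : KObj D where
  obj :=
    { obj := (Pdiscrete D).obj X
      property := fun δ _ => ⟨⟨X, 𝟙 X⟩, trivial,
        ⟨(inferInstance : Epi (𝟙 X)), fun _ g m hm hgm => by
          haveI : IsSplitEpi m := ⟨⟨⟨g, hgm⟩⟩⟩
          exact isIso_of_mono_of_isSplitEpi m⟩,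
        ⟨δ.2, Category.id_comp _⟩⟩ }
  property := ⟨{
    lift := fun c => c.π.app ⟨⟨X, 𝟙 X⟩, trivial⟩
    fac := fun c j => by
      have h := c.π.naturality (X := ⟨⟨X, 𝟙 X⟩, trivial⟩) (Y := j)
        ⟨j.1.2, Category.id_comp _⟩
      dsimp [FiltDiagram, filtCone] at h ⊢
      exact h.symm.trans (Category.id_comp _)
    uniq := fun c m hm => by
      have h := hm ⟨⟨X, 𝟙 X⟩, trivial⟩
      rw [← Category.comp_id m]
      exact h }⟩

/-- The discrete filtration functor `D → KD`. -/
def kDiscrete (D : Type u) [Category.{v} D] : D ⥤ KObj D where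
  obj X := kDiscreteObj X
  map f := ⟨⟨⟨f, fun _ _ => trivial⟩⟩⟩
  map_id _ := rfl
  map_comp _ _ := rfl

/-- The morphism in `KD` from an iso-filtered object to the discrete object on
the target of an element of its filtration. -/
def kToDiscrete {A : KObj D} (δ : MorFrom A.obj.obj.base)
    (hδ : δ ∈ A.obj.obj.filt.carrier) : A ⟶ kDiscreteObj δ.1 :=
  ⟨⟨show PHom A.obj.obj ((kDiscreteObj δ.1).obj.obj) from
    ⟨δ.2, fun γ _ => A.obj.obj.filt.saturated' δ hδ _ ⟨γ.2, rfl⟩⟩⟩⟩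

/-- The natural transformation `P(G) → P(H)` induced by `ν : G → H`. -/
def Pnat {E : Type u₂} [Category.{v₂} E] {G H : D ⥤ E} (ν : G ⟶ H) :
    Pfunctor G ⟶ Pfunctor H where
  app A :=
    ⟨ν.app A.base, by
      rintro δ' ⟨δ, hδ, g, hg⟩
      exact ⟨δ, hδ, ⟨ν.app δ.1 ≫ g, by
        rw [← Category.assoc, ν.naturality, Category.assoc, hg]; rfl⟩⟩⟩
  naturality {A B} f := PHom.ext' (ν.naturality (PHom.toHom f))

theorem Dom.refl {X : D} (δ : MorFrom X) : Dom δ δ := ⟨𝟙 _, Category.comp_id _⟩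

theorem Dom.trans {X : D} {δ₁ δ₂ δ₃ : MorFrom X} (h₁₂ : Dom δ₁ δ₂) (h₂₃ : Dom δ₂ δ₃) :
    Dom δ₁ δ₃ := by
  obtain ⟨g, hg⟩ := h₁₂
  obtain ⟨k, hk⟩ := h₂₃
  exact ⟨g ≫ k, by rw [← Category.assoc, hg, hk]⟩

theorem EMCat.dom_of_dom_of_comp_mono (hEM : EMCat D) {X : D} {ε δ γ : MorFrom X}
    (hε : ExtremalEpi ε.2) {m : δ.1 ⟶ γ.1} (hm : Mono m) (hδγ : δ.2 ≫ m = γ.2)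
    (h : Dom ε γ) : Dom ε δ := by
  obtain ⟨k, hk⟩ := h
  obtain ⟨d, hd, -⟩ := hEM.diag ε.2 m δ.2 k hε hm (hδγ.trans hk.symm)
  exact ⟨d, hd⟩

namespace ProjFilt

variable {X Y : D}

theorem genSet_subset {S : Set (MorFrom X)} {P : ProjFilt X} (h : S ⊆ P.carrier) :
    genSet S ⊆ P.carrier :=
  fun _ hδ => hδ P h

theorem subset_genSet (S : Set (MorFrom X)) : S ⊆ genSet S :=
  fun _ hδ _ hP => hP hδ

theorem mem_of_eq (P : ProjFilt X) {f g : X ⟶ Y} (hf : ⟨Y, f⟩ ∈ P.carrier) (h : f = g) :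
    ⟨Y, g⟩ ∈ P.carrier :=
  h ▸ hf

theorem terminal_from_mem [HasTerminal D] (P : ProjFilt X) :
    (⟨⊤_ D, terminal.from X⟩ : MorFrom X) ∈ P.carrier := by
  obtain ⟨δ, hδ⟩ := P.nonempty'
  exact P.saturated' δ hδ _ ⟨terminal.from δ.1, terminal.comp_from δ.2⟩

theorem prod_lift_mem [HasBinaryProducts D] (P : ProjFilt X) {δ₁ δ₂ : MorFrom X}
    (h₁ : δ₁ ∈ P.carrier) (h₂ : δ₂ ∈ P.carrier) :
    (⟨δ₁.1 ⨯ δ₂.1, prod.lift δ₁.2 δ₂.2⟩ : MorFrom X) ∈ P.carrier := by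
  obtain ⟨δ, hδ, ⟨g₁, hg₁⟩, ⟨g₂, hg₂⟩⟩ := P.directed' δ₁ h₁ δ₂ h₂
  exact P.saturated' δ hδ _ ⟨prod.lift g₁ g₂, by rw [prod.comp_lift, hg₁, hg₂]⟩

section FiniteProducts

variable [HasTerminal D] [HasBinaryProducts D]

/-- With finite products, directedness of a saturated class amounts to containing the
terminal map and being closed under pairing. -/
def ofProdLiftMem (S : Set (MorFrom X)) (terminal_from_mem : ⟨⊤_ D, terminal.from X⟩ ∈ S)
    (prod_lift_mem : ∀ δ₁ ∈ S, ∀ δ₂ ∈ S, ⟨δ₁.1 ⨯ δ₂.1, prod.lift δ₁.2 δ₂.2⟩ ∈ S)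
    (saturated : ∀ δ ∈ S, ∀ δ', Dom δ δ' → δ' ∈ S) : ProjFilt X where
  carrier := S
  nonempty' := ⟨_, terminal_from_mem⟩
  directed' δ₁ h₁ δ₂ h₂ := ⟨_, prod_lift_mem δ₁ h₁ δ₂ h₂,
    ⟨prod.fst, prod.lift_fst _ _⟩, ⟨prod.snd, prod.lift_snd _ _⟩⟩
  saturated' := saturated

def push (f : X ⟶ Y) (P : ProjFilt X) : ProjFilt Y :=
  ofProdLiftMem (pushSet f P.carrier)
    (P.mem_of_eq P.terminal_from_mem (terminal.comp_from f).symm :)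
    (fun δ₁ h₁ δ₂ h₂ =>
      (P.mem_of_eq (P.prod_lift_mem h₁ h₂) (prod.comp_lift f δ₁.2 δ₂.2).symm :))
    (fun δ hδ δ' ⟨h, hh⟩ => P.saturated' _ hδ _ ⟨h, by rw [Category.assoc, hh]⟩)

def meet {ι : Type*} (P : ι → ProjFilt X) : ProjFilt X :=
  ofProdLiftMem {δ | ∀ i, δ ∈ (P i).carrier}
    (fun i => (P i).terminal_from_mem)
    (fun _ h₁ _ h₂ i => (P i).prod_lift_mem (h₁ i) (h₂ i))
    (fun δ hδ δ' h i => (P i).saturated' δ (hδ i) δ' h)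

def generate (S : Set (MorFrom X)) : ProjFilt X :=
  ofProdLiftMem (genSet S)
    (fun P _ => P.terminal_from_mem)
    (fun _ h₁ _ h₂ P hP => P.prod_lift_mem (h₁ P hP) (h₂ P hP))
    (fun δ hδ δ' h P hP => P.saturated' δ (hδ P hP) δ' h)

end FiniteProducts

section Reduction

variable (hEM : EMCat D)
include hEM

def reduction (P : ProjFilt X) : ProjFilt X where
  carrier := redSet P.carrier
  nonempty' := by
    obtain ⟨⟨W, δ⟩, hδ⟩ := P.nonempty'
    obtain ⟨Z, e, m, he, hm, rfl⟩ := hEM.fact δ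
    exact ⟨⟨Z, e⟩, ⟨Z, e⟩, he, ⟨_, hδ, m, hm, rfl⟩, Dom.refl _⟩
  directed' := by
    rintro δ₁ ⟨ε₁, -, ⟨γ₁, hγ₁, m₁, hm₁, hεγ₁⟩, hd₁⟩
      δ₂ ⟨ε₂, -, ⟨γ₂, hγ₂, m₂, hm₂, hεγ₂⟩, hd₂⟩
    obtain ⟨⟨W, γ⟩, hγ, hk₁, hk₂⟩ := P.directed' γ₁ hγ₁ γ₂ hγ₂
    obtain ⟨Z, e, m, he, hm, rfl⟩ := hEM.fact γ
    -- the extremal epi part of a common bound of `γ₁, γ₂` dominates `ε₁, ε₂` by fill-in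
    have hd : Dom ⟨Z, e⟩ ⟨W, e ≫ m⟩ := ⟨m, rfl⟩
    exact ⟨⟨Z, e⟩, ⟨⟨Z, e⟩, he, ⟨_, hγ, m, hm, rfl⟩, Dom.refl _⟩,
      (hEM.dom_of_dom_of_comp_mono he hm₁ hεγ₁ (hd.trans hk₁)).trans hd₁,
      (hEM.dom_of_dom_of_comp_mono he hm₂ hεγ₂ (hd.trans hk₂)).trans hd₂⟩
  saturated' := by
    rintro δ ⟨ε, hε, hγ, hd⟩ δ' h
    exact ⟨ε, hε, hγ, hd.trans h⟩

theorem reduction_reduced (P : ProjFilt X) : (P.reduction hEM).Reduced := by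
  rintro δ ⟨ε, hε, hγ, hd⟩
  exact ⟨ε, ⟨ε, hε, hγ, Dom.refl _⟩, hε, hd⟩

theorem subset_reduction (P : ProjFilt X) : P.carrier ⊆ (P.reduction hEM).carrier := by
  rintro ⟨W, δ⟩ hδ
  obtain ⟨Z, e, m, he, hm, rfl⟩ := hEM.fact δ
  exact ⟨⟨Z, e⟩, he, ⟨_, hδ, m, hm, rfl⟩, ⟨m, rfl⟩⟩

theorem Reduced.mem_of_comp_mono {P : ProjFilt X} (hP : P.Reduced) {δ γ : MorFrom X}
    {m : δ.1 ⟶ γ.1} (hm : Mono m) (hδγ : δ.2 ≫ m = γ.2) (hγ : γ ∈ P.carrier) :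
    δ ∈ P.carrier := by
  obtain ⟨ε, hε, hεe, hd⟩ := hP γ hγ
  exact P.saturated' ε hε δ (hEM.dom_of_dom_of_comp_mono hεe hm hδγ hd)

theorem reduced_of_mem_of_comp_mono {P : ProjFilt X}
    (h : ∀ {Y Z : D} (g : X ⟶ Y) (m : Y ⟶ Z), Mono m →
      ⟨Z, g ≫ m⟩ ∈ P.carrier → ⟨Y, g⟩ ∈ P.carrier) :
    P.Reduced := by
  rintro ⟨W, δ⟩ hδ
  obtain ⟨Z, e, m, he, hm, rfl⟩ := hEM.fact δ
  exact ⟨⟨Z, e⟩, h e m hm hδ, he, ⟨m, rfl⟩⟩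

theorem Reduced.redSet_subset {P : ProjFilt X} (hP : P.Reduced) {S : Set (MorFrom X)}
    (hS : S ⊆ P.carrier) : redSet S ⊆ P.carrier := by
  rintro δ ⟨ε, -, ⟨γ, hγ, m, hm, hεγ⟩, hd⟩
  exact P.saturated' ε (hP.mem_of_comp_mono hEM hm hεγ (hS hγ)) δ hd

variable [HasTerminal D] [HasBinaryProducts D]

theorem push_reduced (f : X ⟶ Y) {P : ProjFilt X} (hP : P.Reduced) : (P.push f).Reduced :=
  reduced_of_mem_of_comp_mono hEM fun _ _ hm h =>
    hP.mem_of_comp_mono hEM hm (Category.assoc _ _ _) h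

theorem meet_reduced {ι : Type*} {P : ι → ProjFilt X} (hP : ∀ i, (P i).Reduced) :
    (meet P).Reduced :=
  reduced_of_mem_of_comp_mono hEM fun _ _ hm h i => (hP i).mem_of_comp_mono hEM hm rfl (h i)

end Reduction

end ProjFilt

abbrev qForget (D : Type u) [Category.{v} D] : QObj D ⥤ D := qpInclusion D ⋙ Pforget D

instance : (qpInclusion D).Faithful :=
  inferInstanceAs (ObjectProperty.ι _).Faithful

instance : (Pforget D).Faithful where
  map_injective h := PHom.ext' h

theorem QObj.hom_ext {A B : QObj D} {f g : A ⟶ B} (h : f.hom.toHom = g.hom.toHom) : f = g :=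
  InducedCategory.hom_ext (PHom.ext' h)

section Constructions

variable [HasLimits D] (hEM : EMCat D) {J : Type v} [SmallCategory J] (F : J ⥤ QObj D)

noncomputable def colimitCocone [HasColimits D] : Cocone F where
  pt := ⟨⟨colimit (F ⋙ qForget D),
      ProjFilt.meet fun j => (F.obj j).obj.filt.push (colimit.ι (F ⋙ qForget D) j)⟩,
    ProjFilt.meet_reduced hEM fun j => ProjFilt.push_reduced hEM _ (F.obj j).property⟩
  ι :=
    { app j := ⟨⟨colimit.ι (F ⋙ qForget D) j, fun _ hδ => hδ j⟩⟩
      naturality _ _ f := QObj.hom_ext ((colimit.w (F ⋙ qForget D) f).trans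
        (Category.comp_id _).symm) }

noncomputable def isColimitMapCoconeColimitCocone [HasColimits D] :
    IsColimit ((qForget D).mapCocone (colimitCocone hEM F)) :=
  colimit.isColimit (F ⋙ qForget D)

noncomputable def isColimitColimitCocone [HasColimits D] : IsColimit (colimitCocone hEM F) :=
  IsColimit.ofFaithful (qForget D) (isColimitMapCoconeColimitCocone hEM F)
    (fun s => ⟨⟨colimit.desc (F ⋙ qForget D) ((qForget D).mapCocone s), fun δ hδ j =>
      (ProjFilt.mem_of_eq _ ((s.ι.app j).hom.mem δ hδ)
        (colimit.ι_desc_assoc ((qForget D).mapCocone s) j δ.2).symm :)⟩⟩)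
    (fun _ => rfl)

def limitGen : Set (MorFrom (limit (F ⋙ qForget D))) :=
  ⋃ j, pullSet (limit.π (F ⋙ qForget D) j) (F.obj j).obj.filt.carrier

noncomputable def limitCone : Cone F where
  pt := ⟨⟨limit (F ⋙ qForget D), (ProjFilt.generate (limitGen F)).reduction hEM⟩,
    ProjFilt.reduction_reduced hEM _⟩
  π :=
    { app j := ⟨⟨limit.π (F ⋙ qForget D) j, fun δ hδ =>
        ProjFilt.subset_reduction hEM _
          (ProjFilt.subset_genSet _ (Set.mem_iUnion.2 ⟨j, δ, hδ, rfl⟩))⟩⟩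
      naturality _ _ f := QObj.hom_ext ((Category.id_comp _).trans
        (limit.w (F ⋙ qForget D) f).symm) }

noncomputable def isLimitMapConeLimitCone : IsLimit ((qForget D).mapCone (limitCone hEM F)) :=
  limit.isLimit (F ⋙ qForget D)

theorem limitCone_carrier_subset_push_lift (s : Cone F) :
    (limitCone hEM F).pt.obj.filt.carrier ⊆
      (s.pt.obj.filt.push (limit.lift (F ⋙ qForget D) ((qForget D).mapCone s))).carrier := by
  refine (ProjFilt.push_reduced hEM _ s.pt.property).redSet_subset hEM
    (ProjFilt.genSet_subset ?_)
  rintro _ hγ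
  obtain ⟨j, δ, hδ, rfl⟩ := Set.mem_iUnion.1 hγ
  exact (ProjFilt.mem_of_eq _ ((s.π.app j).hom.mem δ hδ)
    (limit.lift_π_assoc ((qForget D).mapCone s) j δ.2).symm :)

noncomputable def isLimitLimitCone : IsLimit (limitCone hEM F) :=
  IsLimit.ofFaithful (qForget D) (isLimitMapConeLimitCone hEM F)
    (fun s => ⟨⟨limit.lift (F ⋙ qForget D) ((qForget D).mapCone s),
      fun _ hδ => limitCone_carrier_subset_push_lift hEM F s hδ⟩⟩)
    (fun _ => rfl)

end Constructions

theorem qobj_complete_cocomplete_general [Limits.HasLimits D] [Limits.HasColimits D]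
    (hEM : EMCat D) :
    Limits.HasLimits (QObj D) ∧
    Limits.HasColimits (QObj D) ∧
    (∀ (J : Type v) [SmallCategory J] (F : J ⥤ QObj D),
      ∃ c : Limits.Cone F, Nonempty (Limits.IsLimit c) ∧
        Nonempty (Limits.IsLimit ((qpInclusion D ⋙ Pforget D).mapCone c)) ∧
        c.pt.obj.filt.carrier =
          redSet (genSet (⋃ j : J,
            pullSet (PHom.toHom (c.π.app j).hom) (F.obj j).obj.filt.carrier))) ∧
    (∀ (J : Type v) [SmallCategory J] (F : J ⥤ QObj D),
      ∃ c : Limits.Cocone F, Nonempty (Limits.IsColimit c) ∧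
        Nonempty (Limits.IsColimit ((qpInclusion D ⋙ Pforget D).mapCocone c)) ∧
        c.pt.obj.filt.carrier =
          {g : MorFrom c.pt.obj.base | ∀ j : J,
            (⟨g.1, PHom.toHom (c.ι.app j).hom ≫ g.2⟩ : MorFrom (F.obj j).obj.base)
              ∈ (F.obj j).obj.filt.carrier}) :=
  ⟨⟨fun _ _ => ⟨fun F => ⟨⟨⟨_, isLimitLimitCone hEM F⟩⟩⟩⟩⟩,
    ⟨fun _ _ => ⟨fun F => ⟨⟨⟨_, isColimitColimitCocone hEM F⟩⟩⟩⟩⟩,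
    fun _ _ F => ⟨limitCone hEM F, ⟨isLimitLimitCone hEM F⟩,
      ⟨isLimitMapConeLimitCone hEM F⟩, rfl⟩,
    fun _ _ F => ⟨colimitCocone hEM F, ⟨isColimitColimitCocone hEM F⟩,
      ⟨isColimitMapCoconeColimitCocone hEM F⟩, rfl⟩⟩

/-- `QD` is complete and cocomplete; limits are formed by taking
the limit in `D` with the reduced pull back filtration determined by the limit
cone, and colimits by taking the colimit in `D` with the push forward
filtration determined by the colimit cocone. -/
theorem qobj_complete_cocomplete [Limits.HasLimits D] [Limits.HasColimits D]
    (hecwp : ECWP D) (hEM : EMCat D) :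
    Limits.HasLimits (QObj D) ∧
    Limits.HasColimits (QObj D) ∧
    (∀ (J : Type v) [SmallCategory J] (F : J ⥤ QObj D),
      ∃ c : Limits.Cone F, Nonempty (Limits.IsLimit c) ∧
        Nonempty (Limits.IsLimit ((qpInclusion D ⋙ Pforget D).mapCone c)) ∧
        c.pt.obj.filt.carrier =
          redSet (genSet (⋃ j : J,
            pullSet (PHom.toHom (c.π.app j).hom) (F.obj j).obj.filt.carrier))) ∧
    (∀ (J : Type v) [SmallCategory J] (F : J ⥤ QObj D),
      ∃ c : Limits.Cocone F, Nonempty (Limits.IsColimit c) ∧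
        Nonempty (Limits.IsColimit ((qpInclusion D ⋙ Pforget D).mapCocone c)) ∧
        c.pt.obj.filt.carrier =
          {g : MorFrom c.pt.obj.base | ∀ j : J,
            (⟨g.1, PHom.toHom (c.ι.app j).hom ≫ g.2⟩ : MorFrom (F.obj j).obj.base)
              ∈ (F.obj j).obj.filt.carrier}) :=
  qobj_complete_cocomplete_general hEM

end FilteredCats
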